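/- Covariance matrix of the vector of factorial effect estimators: in a completely randomized 2^K factorial experiment, let τ̂ be the vector indexed by subsets ℓ ⊆ {1,…,K} with entries τ̂_ℓ = 2^{−(K−1)} Σ_z λ_{ℓ,z} p_z, let τ_i be the vector with entries 2^{−(K−1)} Σ_z λ_{ℓ,z} Y_i(z), and let τ = (1/N) Σ_{i=1}^N τ_i. Then the covariance matrix of τ̂ satisfies Cov(τ̂) = 2^{−2(K−1)} Σ_{z ∈ {0,1}^K} (S_z²/N_z) λ̃_z λ̃_z^T − (1/(N(N−1))) Σ_{i=1}^N (τ_i − τ)(τ_i − τ)^T, where λ̃_z is the vector indexed by subsets ℓ with entries λ_{ℓ,z}. -/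

import Mathlib

open Finset

/-- The finset of completely randomized assignments of `N` units to treatments in `J`
with group sizes `Nj`. -/
def assignments (N : ℕ) {J : Type*} [Fintype J] [DecidableEq J] (Nj : J → ℕ) :
    Finset (Fin N → J) :=
  Finset.univ.filter fun T => ∀ j, (Finset.univ.filter fun i => T i = j).card = Nj j

/-- Expectation with respect to the uniform distribution on completely randomized
assignments. -/
noncomputable def expect {N : ℕ} {J : Type*} [Fintype J] [DecidableEq J]
    (Nj : J → ℕ) (f : (Fin N → J) → ℝ) : ℝ :=
  (∑ T ∈ assignments N Nj, f T) / ((assignments N Nj).card : ℝ)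

/-- Variance with respect to the randomization distribution. -/
noncomputable def rvar {N : ℕ} {J : Type*} [Fintype J] [DecidableEq J]
    (Nj : J → ℕ) (f : (Fin N → J) → ℝ) : ℝ :=
  expect Nj fun T => (f T - expect Nj f) ^ 2

/-- Covariance with respect to the randomization distribution. -/
noncomputable def rcov {N : ℕ} {J : Type*} [Fintype J] [DecidableEq J]
    (Nj : J → ℕ) (f g : (Fin N → J) → ℝ) : ℝ :=
  expect Nj fun T => (f T - expect Nj f) * (g T - expect Nj g)

/-- Observed group mean `p_j` of treatment `j` under assignment `T`. -/
noncomputable def pObs {N : ℕ} {J : Type*} [DecidableEq J]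
    (Y : Fin N → J → ℝ) (Nj : J → ℕ) (j : J) (T : Fin N → J) : ℝ :=
  (∑ i ∈ Finset.univ.filter fun i => T i = j, Y i j) / (Nj j : ℝ)

/-- Population mean `P_j`. -/
noncomputable def Pmean {N : ℕ} {J : Type*} (Y : Fin N → J → ℝ) (j : J) : ℝ :=
  (∑ i, Y i j) / (N : ℝ)

/-- Population variance `S_j²`. -/
noncomputable def S2 {N : ℕ} {J : Type*} (Y : Fin N → J → ℝ) (j : J) : ℝ :=
  (∑ i, (Y i j - Pmean Y j) ^ 2) / ((N : ℝ) - 1)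

/-- Variance of unit-level differences `S²_{j-j'}`. -/
noncomputable def S2diff {N : ℕ} {J : Type*} (Y : Fin N → J → ℝ) (j j' : J) : ℝ :=
  (∑ i, (Y i j - Y i j' - (Pmean Y j - Pmean Y j')) ^ 2) / ((N : ℝ) - 1)

/-- Contrast coefficient `λ_{ℓ,z} = Π_{k∈ℓ} (2 z_k - 1)` for a subset `ℓ` of factors and a
treatment `z ∈ {0,1}^K`. -/
def lam {K : ℕ} (ℓ : Finset (Fin K)) (z : Fin K → Bool) : ℝ :=
  ∏ k ∈ ℓ, (if z k then 1 else -1)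

/-- Finite-population factorial effect `τ_ℓ = 2^{-(K-1)} Σ_z λ_{ℓ,z} P_z`. -/
noncomputable def tauFP {N K : ℕ} (Y : Fin N → (Fin K → Bool) → ℝ) (ℓ : Finset (Fin K)) : ℝ :=
  (1 / 2 ^ (K - 1)) * ∑ z, lam ℓ z * Pmean Y z

/-- Unit-level factorial effect `τ_{i,ℓ} = 2^{-(K-1)} Σ_z λ_{ℓ,z} Y_i(z)`. -/
noncomputable def tauUnit {N K : ℕ} (Y : Fin N → (Fin K → Bool) → ℝ) (i : Fin N)
    (ℓ : Finset (Fin K)) : ℝ :=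
  (1 / 2 ^ (K - 1)) * ∑ z, lam ℓ z * Y i z

/-- Plug-in factorial effect estimator `τ̂_ℓ = 2^{-(K-1)} Σ_z λ_{ℓ,z} p_z`. -/
noncomputable def tauHat {N K : ℕ} (Y : Fin N → (Fin K → Bool) → ℝ)
    (Nj : (Fin K → Bool) → ℕ) (ℓ : Finset (Fin K)) (T : Fin N → (Fin K → Bool)) : ℝ :=
  (1 / 2 ^ (K - 1)) * ∑ z, lam ℓ z * pObs Y Nj z T

/-- Variance of unit-level factorial effects `S²_{τ_ℓ}`. -/
noncomputable def S2tau {N K : ℕ} (Y : Fin N → (Fin K → Bool) → ℝ) (ℓ : Finset (Fin K)) : ℝ :=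
  (∑ i, (tauUnit Y i ℓ - tauFP Y ℓ) ^ 2) / ((N : ℝ) - 1)

/-!
Write `p_j = Σ_i Y_i(j) 1{T i = j} / N_j`; by bilinearity of the randomization covariance
everything reduces to the covariances of the assignment indicators `1{T i = j}`. The design is
invariant under permutations of the units, so `E 1{T i = j} = N_j / N` and
`Cov(1{T i = j}, 1{T i' = j'})` takes one value for `i = i'` and one for `i ≠ i'`. Since
`Σ_{i'} 1{T i' = j'} = N_{j'}` is constant, the off-diagonal value is `-1/(N-1)` times the
diagonal one. Summing against the potential outcomes gives the classical
`Cov(p_j, p_{j'}) = δ_{jj'} S_j² / N_j - S_{jj'} / N` (`S_{jj'}` is `popCov Y j j'`), and the theorem is the image of this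
formula under the linear map with coefficients `2^{-(K-1)} λ_{ℓ,z}`.
-/

section Randomization

variable {N : ℕ} {J : Type*} [DecidableEq J]

def assignIndicator (i : Fin N) (j : J) (T : Fin N → J) : ℝ :=
  if T i = j then 1 else 0

theorem assignIndicator_comp_perm (σ : Equiv.Perm (Fin N)) (i : Fin N) (j : J) (T : Fin N → J) :
    assignIndicator i j (T ∘ σ) = assignIndicator (σ i) j T :=
  rfl

theorem pObs_eq_sum_assignIndicator (Nj : J → ℕ) (Y : Fin N → J → ℝ) (j : J) :
    pObs Y Nj j = fun T => ∑ i, Y i j / Nj j * assignIndicator i j T := by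
  funext T
  simp only [pObs, assignIndicator, sum_filter, sum_div, mul_ite, mul_one, mul_zero, ite_div,
    zero_div]

variable [Fintype J] {Nj : J → ℕ}

theorem mem_assignments {T : Fin N → J} :
    T ∈ assignments N Nj ↔ ∀ j, #{i | T i = j} = Nj j := by
  simp [assignments]

theorem comp_perm_mem_assignments_iff (σ : Equiv.Perm (Fin N)) {T : Fin N → J} :
    T ∘ σ ∈ assignments N Nj ↔ T ∈ assignments N Nj := by
  simp only [mem_assignments, Function.comp_apply]
  exact forall_congr' fun j => Eq.congr_left (card_equiv σ (by simp))

theorem assignments_nonempty (hsum : ∑ j, Nj j = N) : (assignments N Nj).Nonempty := by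
  let e : (Σ j, Fin (Nj j)) ≃ Fin N := Fintype.equivOfCardEq (by simp [hsum])
  refine ⟨fun i => (e.symm i).1, mem_assignments.2 fun j => ?_⟩
  rw [card_equiv e.symm (t := {s | s.1 = j}) (by simp), ← Fintype.card_subtype]
  simpa using Fintype.card_congr (Equiv.sigmaSubtype (β := fun j => Fin (Nj j)) j)

theorem expect_comp_perm (σ : Equiv.Perm (Fin N)) (f : (Fin N → J) → ℝ) :
    expect Nj (fun T => f (T ∘ σ)) = expect Nj f := by
  unfold _root_.expect
  congr 1
  exact sum_equiv (σ.symm.arrowCongr (Equiv.refl J))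
    (fun T => (comp_perm_mem_assignments_iff σ).symm) (fun T _ => rfl)

theorem expect_eq_of_eqOn (hne : (assignments N Nj).Nonempty) {f : (Fin N → J) → ℝ} {c : ℝ}
    (hf : ∀ T ∈ assignments N Nj, f T = c) : expect Nj f = c := by
  unfold _root_.expect
  rw [sum_congr rfl hf, sum_const, nsmul_eq_mul, mul_div_cancel_left₀]
  exact_mod_cast hne.card_pos.ne'

theorem expect_sum {ι : Type*} (s : Finset ι) (f : ι → (Fin N → J) → ℝ) :
    expect Nj (fun T => ∑ x ∈ s, f x T) = ∑ x ∈ s, expect Nj (f x) := by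
  unfold _root_.expect
  rw [sum_comm, sum_div]

theorem expect_const_mul (a : ℝ) (f : (Fin N → J) → ℝ) :
    expect Nj (fun T => a * f T) = a * expect Nj f := by
  unfold _root_.expect
  rw [← mul_sum, mul_div_assoc]

theorem rcov_comm (f g : (Fin N → J) → ℝ) : rcov Nj f g = rcov Nj g f := by
  simp only [rcov, mul_comm]

theorem rcov_eq_expect_mul_sub (hne : (assignments N Nj).Nonempty) (f g : (Fin N → J) → ℝ) :
    rcov Nj f g = expect Nj (fun T => f T * g T) - expect Nj f * expect Nj g := by
  have hcard : ((assignments N Nj).card : ℝ) ≠ 0 := by exact_mod_cast hne.card_pos.ne'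
  unfold rcov _root_.expect
  simp only [sub_mul, mul_sub, sum_sub_distrib, ← sum_mul, ← mul_sum, sum_const, nsmul_eq_mul]
  field_simp
  ring

theorem rcov_sum_right {ι : Type*} (s : Finset ι) (f : (Fin N → J) → ℝ)
    (g : ι → (Fin N → J) → ℝ) :
    rcov Nj f (fun T => ∑ y ∈ s, g y T) = ∑ y ∈ s, rcov Nj f (g y) := by
  unfold rcov
  simp only [expect_sum, ← sum_sub_distrib, mul_sum]

theorem rcov_const_mul_right (a : ℝ) (f g : (Fin N → J) → ℝ) :
    rcov Nj f (fun T => a * g T) = a * rcov Nj f g := by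
  unfold rcov
  simp only [expect_const_mul, ← mul_sub, mul_left_comm _ a]

theorem rcov_sum_mul_sum {ι κ : Type*} (s : Finset ι) (t : Finset κ) (a : ι → ℝ) (b : κ → ℝ)
    (f : ι → (Fin N → J) → ℝ) (g : κ → (Fin N → J) → ℝ) :
    rcov Nj (fun T => ∑ x ∈ s, a x * f x T) (fun T => ∑ y ∈ t, b y * g y T) =
      ∑ x ∈ s, ∑ y ∈ t, a x * b y * rcov Nj (f x) (g y) := by
  rw [rcov_comm, rcov_sum_right]
  refine sum_congr rfl fun x _ => ?_
  rw [rcov_const_mul_right, rcov_comm, rcov_sum_right, mul_sum]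
  refine sum_congr rfl fun y _ => ?_
  rw [rcov_const_mul_right]
  ring

theorem rcov_eq_zero_of_eqOn (hne : (assignments N Nj).Nonempty) (f : (Fin N → J) → ℝ)
    {g : (Fin N → J) → ℝ} {c : ℝ} (hg : ∀ T ∈ assignments N Nj, g T = c) :
    rcov Nj f g = 0 :=
  expect_eq_of_eqOn hne fun T hT => by rw [hg T hT, expect_eq_of_eqOn hne hg, sub_self, mul_zero]

theorem rcov_comp_perm (σ : Equiv.Perm (Fin N)) (f g : (Fin N → J) → ℝ) :
    rcov Nj (fun T => f (T ∘ σ)) (fun T => g (T ∘ σ)) = rcov Nj f g := by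
  unfold rcov
  rw [expect_comp_perm σ f, expect_comp_perm σ g]
  exact expect_comp_perm σ fun T => (f T - expect Nj f) * (g T - expect Nj g)

theorem sum_assignIndicator {T : Fin N → J} (hT : T ∈ assignments N Nj) (j : J) :
    ∑ i, assignIndicator i j T = Nj j := by
  simp [assignIndicator, sum_boole, mem_assignments.1 hT j]

theorem expect_assignIndicator (hsum : ∑ j, Nj j = N) (i : Fin N) (j : J) :
    expect Nj (assignIndicator i j) = Nj j / N := by
  have hsymm : ∀ i', expect Nj (assignIndicator i' j) = expect Nj (assignIndicator i j) :=
    fun i' => by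
      simpa [assignIndicator_comp_perm] using
        expect_comp_perm (Nj := Nj) (Equiv.swap i i') (assignIndicator i j)
  have htotal : ∑ i' : Fin N, expect Nj (assignIndicator i' j) = Nj j := by
    rw [← expect_sum]
    exact expect_eq_of_eqOn (assignments_nonempty hsum) fun T hT => sum_assignIndicator hT j
  simp only [hsymm, sum_const, card_univ, Fintype.card_fin, nsmul_eq_mul] at htotal
  have hN : (N : ℝ) ≠ 0 := by exact_mod_cast i.pos.ne'
  rw [eq_div_iff hN, ← htotal, mul_comm]

theorem rcov_assignIndicator_self (hsum : ∑ j, Nj j = N) (i : Fin N) (j j' : J) :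
    rcov Nj (assignIndicator i j) (assignIndicator i j') =
      Nj j * ((if j = j' then (N : ℝ) else 0) - Nj j') / N ^ 2 := by
  have hprod : (fun T => assignIndicator i j T * assignIndicator i j' T) =
      fun T => (if j = j' then 1 else 0) * assignIndicator i j T := by
    funext T
    by_cases h : j = j' <;> by_cases hT : T i = j <;> simp_all [assignIndicator]
  have hN : (N : ℝ) ≠ 0 := by exact_mod_cast i.pos.ne'
  rw [rcov_eq_expect_mul_sub (assignments_nonempty hsum), hprod, expect_const_mul,
    expect_assignIndicator hsum, expect_assignIndicator hsum]
  split_ifs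
  · field_simp
  · field_simp
    ring

theorem rcov_assignIndicator (hN : 2 ≤ N) (hsum : ∑ j, Nj j = N) (i i' : Fin N) (j j' : J) :
    rcov Nj (assignIndicator i j) (assignIndicator i' j') =
      Nj j * ((if j = j' then (N : ℝ) else 0) - Nj j') / (N * (N - 1)) *
        ((if i = i' then 1 else 0) - 1 / N) := by
  have hN0 : (N : ℝ) ≠ 0 := by positivity
  have hN1 : (N : ℝ) - 1 ≠ 0 := by
    have : (2 : ℝ) ≤ N := by exact_mod_cast hN
    linarith
  obtain rfl | hii := eq_or_ne i i'
  · rw [rcov_assignIndicator_self hsum, if_pos rfl]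
    field_simp
  set c := fun k => rcov Nj (assignIndicator i j) (assignIndicator k j') with hc
  have hsymm : ∀ k ∈ univ.erase i, c k = c i' := fun k hk => by
    have hik : i ≠ k := (ne_of_mem_erase hk).symm
    simpa [hc, assignIndicator_comp_perm, Equiv.swap_apply_of_ne_of_ne hii hik] using
      rcov_comp_perm (Nj := Nj) (Equiv.swap i' k) (assignIndicator i j) (assignIndicator i' j')
  have hzero : c i + (N - 1) * c i' = 0 := by
    have hsum_c : ∑ k, c k = 0 := by
      rw [hc, ← rcov_sum_right]
      exact rcov_eq_zero_of_eqOn (assignments_nonempty hsum) _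
        fun T hT => sum_assignIndicator hT j'
    rwa [← add_sum_erase _ _ (mem_univ i), sum_congr rfl hsymm, sum_const,
      card_erase_of_mem (mem_univ i), card_univ, Fintype.card_fin, nsmul_eq_mul,
      Nat.cast_pred (by omega)] at hsum_c
  have hself : c i = Nj j * ((if j = j' then (N : ℝ) else 0) - Nj j') / N ^ 2 :=
    rcov_assignIndicator_self hsum i j j'
  change c i' = _
  rw [if_neg hii, eq_div_of_mul_eq hN1 (by linarith : c i' * (N - 1) = -c i), hself]
  field_simp
  ring

end Randomization

theorem sum_sum_mul_sub_inv_card {ι : Type*} [Fintype ι] [DecidableEq ι] (x y : ι → ℝ) :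
    ∑ i, ∑ i', x i * y i' * ((if i = i' then 1 else 0) - 1 / Fintype.card ι) =
      ∑ i, (x i - (∑ k, x k) / Fintype.card ι) * (y i - (∑ k, y k) / Fintype.card ι) := by
  simp only [mul_sub, sub_mul, mul_ite, mul_one, mul_zero, sum_sub_distrib, sum_ite_eq,
    mem_univ, if_true, ← sum_mul, ← mul_sum, sum_const, card_univ, nsmul_eq_mul]
  obtain h | h := eq_or_ne (Fintype.card ι : ℝ) 0
  · simp [h]
  · field_simp
    ring

noncomputable def popCov {N : ℕ} {J : Type*} (Y : Fin N → J → ℝ) (j j' : J) : ℝ :=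
  (∑ i, (Y i j - Pmean Y j) * (Y i j' - Pmean Y j')) / ((N : ℝ) - 1)

section GroupMeans

variable {N : ℕ} {J : Type*} [Fintype J] [DecidableEq J] {Nj : J → ℕ}

theorem rcov_pObs (hN : 2 ≤ N) (hsum : ∑ j, Nj j = N) (hpos : ∀ j, 1 ≤ Nj j)
    (Y : Fin N → J → ℝ) (j j' : J) :
    rcov Nj (pObs Y Nj j) (pObs Y Nj j') =
      (if j = j' then S2 Y j / Nj j else 0) - popCov Y j j' / N := by
  have hN0 : (N : ℝ) ≠ 0 := by positivity
  have hN1 : (N : ℝ) - 1 ≠ 0 := by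
    have : (2 : ℝ) ≤ N := by exact_mod_cast hN
    linarith
  have hj : (Nj j : ℝ) ≠ 0 := by have := hpos j; positivity
  have hj' : (Nj j' : ℝ) ≠ 0 := by have := hpos j'; positivity
  set κ : ℝ := Nj j * ((if j = j' then (N : ℝ) else 0) - Nj j') / (N * (N - 1))
  have hcov : rcov Nj (pObs Y Nj j) (pObs Y Nj j') =
      κ / (Nj j * Nj j') * ∑ i, (Y i j - Pmean Y j) * (Y i j' - Pmean Y j') := by
    have := sum_sum_mul_sub_inv_card (fun i => Y i j) (fun i => Y i j')
    simp only [Fintype.card_fin] at this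
    rw [pObs_eq_sum_assignIndicator, pObs_eq_sum_assignIndicator, rcov_sum_mul_sum]
    simp only [Pmean, ← this, mul_sum, rcov_assignIndicator hN hsum]
    exact sum_congr rfl fun i _ => sum_congr rfl fun i' _ => by ring
  rw [hcov, popCov]
  split_ifs with h
  · subst h
    simp only [κ, if_true, S2, sq]
    field_simp
  · simp only [κ, if_neg h]
    field_simp
    ring

theorem rcov_sum_mul_pObs (hN : 2 ≤ N) (hsum : ∑ j, Nj j = N) (hpos : ∀ j, 1 ≤ Nj j)
    (Y : Fin N → J → ℝ) (a b : J → ℝ) :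
    rcov Nj (fun T => ∑ j, a j * pObs Y Nj j T) (fun T => ∑ j, b j * pObs Y Nj j T) =
      ∑ j, a j * b j * (S2 Y j / Nj j) -
        (∑ i, (∑ j, a j * (Y i j - Pmean Y j)) * (∑ j, b j * (Y i j - Pmean Y j))) /
          (N * (N - 1)) := by
  have hD : (∑ i, (∑ j, a j * (Y i j - Pmean Y j)) * (∑ j, b j * (Y i j - Pmean Y j))) /
      (N * (N - 1)) = ∑ j, ∑ j', a j * b j' * (popCov Y j j' / N) := by
    simp_rw [sum_div, sum_mul_sum, sum_div]
    rw [sum_comm]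
    refine sum_congr rfl fun j _ => ?_
    rw [sum_comm]
    refine sum_congr rfl fun j' _ => ?_
    rw [popCov, div_div, sum_div, mul_sum]
    exact sum_congr rfl fun i _ => by rw [mul_comm ((N : ℝ) - 1)]; ring
  rw [hD, rcov_sum_mul_sum]
  simp only [rcov_pObs hN hsum hpos, mul_sub, sum_sub_distrib, mul_ite, mul_zero, sum_ite_eq,
    mem_univ, if_true]

end GroupMeans

/-- Covariance matrix of the vector of factorial effect estimators:
`Cov(τ̂) = 2^{-2(K-1)} Σ_z (S_z²/N_z) λ̃_z λ̃_zᵀ - (1/(N(N-1))) Σ_i (τ_i - τ)(τ_i - τ)ᵀ`. -/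
theorem cov_matrix_tauHat {N K : ℕ} (hN : 2 ≤ N)
    (Y : Fin N → (Fin K → Bool) → ℝ) (Nj : (Fin K → Bool) → ℕ)
    (hpos : ∀ z, 1 ≤ Nj z) (hsum : ∑ z, Nj z = N) :
    (Matrix.of fun ℓ ℓ' : Finset (Fin K) =>
        rcov Nj (tauHat Y Nj ℓ) (tauHat Y Nj ℓ')) =
      ((1 / 2 ^ (2 * (K - 1)) : ℝ) •
          ∑ z, (S2 Y z / (Nj z : ℝ)) •
            Matrix.vecMulVec (fun ℓ : Finset (Fin K) => lam ℓ z)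
              (fun ℓ : Finset (Fin K) => lam ℓ z))
        - (1 / ((N : ℝ) * ((N : ℝ) - 1))) •
            ∑ i, Matrix.vecMulVec (fun ℓ : Finset (Fin K) => tauUnit Y i ℓ - tauFP Y ℓ)
              (fun ℓ : Finset (Fin K) => tauUnit Y i ℓ - tauFP Y ℓ) := by
  set c : ℝ := 1 / 2 ^ (K - 1) with hc
  have hc2 : c * c = 1 / 2 ^ (2 * (K - 1)) := by
    rw [hc, two_mul, pow_add, one_div_mul_one_div]
  have htauHat : ∀ ℓ, tauHat Y Nj ℓ = fun T => ∑ z, c * lam ℓ z * pObs Y Nj z T := fun ℓ => by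
    funext T
    simp only [tauHat, mul_sum, mul_assoc, hc]
  have htauUnit : ∀ i ℓ, tauUnit Y i ℓ - tauFP Y ℓ = ∑ z, c * lam ℓ z * (Y i z - Pmean Y z) :=
    fun i ℓ => by simp only [tauUnit, tauFP, ← mul_sub, ← sum_sub_distrib, mul_sum, mul_assoc, hc]
  ext ℓ ℓ'
  simp only [Matrix.of_apply, Matrix.sub_apply, Matrix.smul_apply, Matrix.sum_apply,
    Matrix.vecMulVec_apply, smul_eq_mul, htauHat, htauUnit, rcov_sum_mul_pObs hN hsum hpos]
  congr 1
  · rw [← hc2, mul_sum]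
    exact sum_congr rfl fun z _ => by ring
  · ring
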